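/- arXiv:2404.04760 — 5 statements merged into one kernel-verified Lean document; each statement's English description precedes it below -/
import Mathlib

section
/- Reduced-and-ordered symbolic packets are canonical: for SPs p₁ and p₂ that are both reduced and ordered, p₁ = p₂ syntactically if and only if ⟦p₁⟧ = ⟦p₂⟧ (they denote the same set of packets). The proof requires the assumption that the value space V is strictly larger than the finite set of values mentioned in p₁ and p₂. -/
/-!
Statement 7: reduced-and-ordered symbolic packets are canonical: if `p₁` and
`p₂` are both reduced and ordered, then `p₁ = p₂` syntactically iff they
denote the same set of packets.  The value space `V` is assumed to be larger
than any finite set of values mentioned in SPs (we take it infinite).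
-/


inductive SP (F V : Type) : Type where
  | bot : SP F V
  | top : SP F V
  | node : F → List (V × SP F V) → SP F V → SP F V

namespace SP

variable {F V : Type} [DecidableEq V]

/-- Branch lookup with default. -/
def getD (b : List (V × SP F V)) (v : V) (d : SP F V) : SP F V :=
  match b with
  | [] => d
  | q :: rest => if q.1 = v then q.2 else getD rest v d

theorem sizeOf_getD_lt (b : List (V × SP F V)) (v : V) (d : SP F V) :
    sizeOf (getD b v d) < 1 + sizeOf b + sizeOf d := by
  induction b with
  | nil => simp [getD]
  | cons q rest ih =>
    simp only [getD]
    split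
    · have : sizeOf q.2 < sizeOf q := by
        obtain ⟨a, c⟩ := q; simp
      simp only [List.cons.sizeOf_spec]; omega
    · simp only [List.cons.sizeOf_spec]; omega

/-- Membership of a packet in the set denoted by an SP. -/
def mem (π : F → V) (p : SP F V) : Prop :=
  match p with
  | .bot => False
  | .top => True
  | .node f b d => mem π (getD b (π f) d)
termination_by sizeOf p
decreasing_by
  have := sizeOf_getD_lt b (π f) d
  simp only [SP.node.sizeOf_spec]
  omega

/-- Denotation of an SP as a set of packets. -/
def sem (p : SP F V) : Set (F → V) := {π | mem π p}

open Classical in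
/-- Smart constructor: drop branches syntactically equal to the default,
collapse to the default if nothing remains. -/
noncomputable def spsc (f : F) (b : List (V × SP F V)) (d : SP F V) : SP F V :=
  let b' := b.filter (fun q => decide (q.2 ≠ d))
  if b' = [] then d else .node f b' d

end SP

namespace SP

variable {F V : Type} [LinearOrder F] [LinearOrder V]

/-- `ROf f p`: the SP `p` is reduced and ordered for the field `f`:
all fields tested in `p` are strictly greater than `f` (and recursively ordered),
the branch keys are strictly ordered, the branch map of a node is nonempty,
and no branch child is syntactically equal to the default child. -/
inductive ROf : F → SP F V → Prop where
  | bot (f : F) : ROf f .bot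
  | top (f : F) : ROf f .top
  | node (f f' : F) (b : List (V × SP F V)) (d : SP F V) :
      f < f' →
      b ≠ [] →
      (∀ q ∈ b, ROf f' q.2) →
      ROf f' d →
      (∀ q ∈ b, q.2 ≠ d) →
      List.Pairwise (· < ·) (b.map Prod.fst) →
      ROf f (.node f' b d)

/-- `p` is reduced and ordered. -/
def RO (p : SP F V) : Prop := ∃ f, ROf f p

end SP

namespace SP

theorem mem_node' {F V : Type} [DecidableEq V] (π : F → V) (f : F)
    (b : List (V × SP F V)) (d : SP F V) :
    mem π (.node f b d) ↔ mem π (getD b (π f) d) := by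
  rw [mem]

theorem sizeOf_pos {F V : Type} (p : SP F V) : 1 ≤ sizeOf p := by
  cases p <;> simp <;> omega

theorem sizeOf_snd_lt {F V : Type} {b : List (V × SP F V)} {q : V × SP F V}
    (h : q ∈ b) : sizeOf q.2 + 1 < sizeOf b := by
  induction b with
  | nil => simp at h
  | cons a t ih =>
    rcases List.mem_cons.mp h with rfl | h
    · obtain ⟨x, y⟩ := q; simp; omega
    · have := ih h; simp; omega

theorem getD_cons_self {F V : Type} [DecidableEq V] (v : V) (s : SP F V)
    (t : List (V × SP F V)) (d : SP F V) : getD ((v, s) :: t) v d = s := by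
  simp [getD]

theorem getD_cons_ne {F V : Type} [DecidableEq V] {v v' : V} (s : SP F V)
    (t : List (V × SP F V)) (d : SP F V) (h : v' ≠ v) :
    getD ((v', s) :: t) v d = getD t v d := by
  simp [getD, h]

theorem getD_not_mem {F V : Type} [DecidableEq V] {b : List (V × SP F V)}
    {v : V} (d : SP F V) (h : v ∉ b.map Prod.fst) : getD b v d = d := by
  induction b with
  | nil => rfl
  | cons a t ih =>
    simp only [List.map_cons, List.mem_cons, not_or] at h
    obtain ⟨x, y⟩ := a
    rw [getD_cons_ne y t d (fun he => h.1 he.symm)]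
    exact ih h.2

variable {F V : Type} [LinearOrder F] [LinearOrder V]

theorem ROf_getD {f : F} {b : List (V × SP F V)} {d : SP F V} (v : V)
    (hb : ∀ q ∈ b, ROf f q.2) (hd : ROf f d) : ROf f (getD b v d) := by
  induction b with
  | nil => exact hd
  | cons a t ih =>
    simp only [getD]
    split
    · exact hb a (List.mem_cons_self)
    · exact ih (fun q hq => hb q (List.mem_cons_of_mem _ hq))

theorem ROf_mono {f f' : F} {p : SP F V} (h : f ≤ f') (hp : ROf f' p) :
    ROf f p := by
  cases hp with
  | bot => exact .bot f
  | top => exact .top f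
  | node _ f'' b d h1 h2 h3 h4 h5 h6 =>
    exact .node f f'' b d (lt_of_le_of_lt h h1) h2 h3 h4 h5 h6

theorem mem_update : ∀ (n : ℕ) (p : SP F V), sizeOf p ≤ n → ∀ f : F, ROf f p →
    ∀ (π : F → V) (v : V), mem (Function.update π f v) p ↔ mem π p := by
  intro n
  induction n with
  | zero => intro p hp; have := sizeOf_pos p; omega
  | succ n ih =>
    intro p hp f hRO π v
    cases hRO with
    | bot => rw [mem, mem]
    | top => rw [mem, mem]
    | node _ f' b d hff' hb hbRO hdRO hred hsort =>
      rw [mem_node', mem_node', Function.update_of_ne (ne_of_gt hff')]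
      have hsz := sizeOf_getD_lt b (π f') d
      simp only [SP.node.sizeOf_spec] at hp
      exact ih _ (by omega) f
        (ROf_mono (le_of_lt hff') (ROf_getD (π f') hbRO hdRO)) π v

theorem branches_eq : ∀ (b₁ b₂ : List (V × SP F V)) (d : SP F V),
    List.Pairwise (· < ·) (b₁.map Prod.fst) →
    List.Pairwise (· < ·) (b₂.map Prod.fst) →
    (∀ q ∈ b₁, q.2 ≠ d) → (∀ q ∈ b₂, q.2 ≠ d) →
    (∀ v, getD b₁ v d = getD b₂ v d) → b₁ = b₂ := by
  intro b₁
  induction b₁ with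
  | nil =>
    intro b₂ d _ hs₂ _ hne₂ h
    cases b₂ with
    | nil => rfl
    | cons a t =>
      exfalso
      obtain ⟨x, y⟩ := a
      have h1 := h x
      rw [getD_cons_self] at h1
      exact hne₂ (x, y) (List.mem_cons_self) h1.symm
  | cons a t ih =>
    intro b₂ d hs₁ hs₂ hne₁ hne₂ h
    obtain ⟨x1, y1⟩ := a
    cases b₂ with
    | nil =>
      exfalso
      have h1 := h x1
      rw [getD_cons_self] at h1
      exact hne₁ (x1, y1) (List.mem_cons_self) h1
    | cons a' t' =>
      obtain ⟨x2, y2⟩ := a'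
      simp only [List.map_cons, List.pairwise_cons] at hs₁ hs₂
      rcases lt_trichotomy x1 x2 with hlt | heq | hgt
      · exfalso
        have h1 := h x1
        rw [getD_cons_self, getD_cons_ne _ _ _ (ne_of_gt hlt),
          getD_not_mem d (fun hm => absurd (hs₂.1 _ hm)
            (not_lt.mpr (le_of_lt hlt)))] at h1
        exact hne₁ (x1, y1) (List.mem_cons_self) h1
      · subst heq
        have h1 := h x1
        rw [getD_cons_self, getD_cons_self] at h1
        subst h1
        have ht : t = t' := by
          apply ih t' d hs₁.2 hs₂.2
            (fun q hq => hne₁ q (List.mem_cons_of_mem _ hq))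
            (fun q hq => hne₂ q (List.mem_cons_of_mem _ hq))
          intro v
          by_cases hv : v = x1
          · subst hv
            rw [getD_not_mem d (fun hm => absurd (hs₁.1 _ hm) (lt_irrefl _)),
              getD_not_mem d (fun hm => absurd (hs₂.1 _ hm) (lt_irrefl _))]
          · have h2 := h v
            rwa [getD_cons_ne _ _ _ (fun he => hv he.symm),
              getD_cons_ne _ _ _ (fun he => hv he.symm)] at h2
        rw [ht]
      · exfalso
        have h1 := h x2
        rw [getD_cons_self, getD_cons_ne _ _ _ (ne_of_gt hgt),
          getD_not_mem d (fun hm => absurd (hs₁.1 _ hm)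
            (fun hc => absurd (lt_trans hgt hc) (lt_irrefl x2)))] at h1
        exact hne₂ (x2, y2) (List.mem_cons_self) h1.symm

end SP

namespace SP

variable {F V : Type} [LinearOrder F] [LinearOrder V]

theorem exists_fresh (l : List V) [Infinite V] : ∃ v : V, v ∉ l := by
  obtain ⟨v, hv⟩ := Infinite.exists_notMem_finset l.toFinset
  exact ⟨v, fun hm => hv (List.mem_toFinset.mpr hm)⟩

theorem node_const_absurd [Infinite V] (n : ℕ)
    (ihn : ∀ p₁ p₂ : SP F V, sizeOf p₁ + sizeOf p₂ ≤ n → ∀ f, ROf f p₁ → ROf f p₂ →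
      (∀ π, mem π p₁ ↔ mem π p₂) → p₁ = p₂)
    {f' : F} {b : List (V × SP F V)} {d : SP F V}
    (hsz : sizeOf (SP.node f' b d) ≤ n)
    (hb : b ≠ []) (hbRO : ∀ q ∈ b, ROf f' q.2) (hdRO : ROf f' d)
    (hred : ∀ q ∈ b, q.2 ≠ d)
    (c : Prop) (hsem : ∀ π : F → V, mem π (SP.node f' b d) ↔ c) : False := by
  cases b with
  | nil => exact hb rfl
  | cons q t =>
    obtain ⟨v₁, s₁⟩ := q
    have hq : (v₁, s₁) ∈ (v₁, s₁) :: t := List.mem_cons_self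
    have hsz' : sizeOf s₁ + sizeOf d ≤ n := by
      simp only [SP.node.sizeOf_spec, List.cons.sizeOf_spec, Prod.mk.sizeOf_spec] at hsz
      omega
    have hπ₀ : ∃ π₀ : F → V, ¬ (mem π₀ s₁ ↔ mem π₀ d) := by
      by_contra hcon
      push_neg at hcon
      exact hred (v₁, s₁) hq (ihn s₁ d hsz' f' (hbRO _ hq) hdRO
        (fun π => hcon π))
    obtain ⟨π₀, hπ₀⟩ := hπ₀
    obtain ⟨v, hv⟩ := exists_fresh (((v₁, s₁) :: t).map Prod.fst)
    have e1 : mem (Function.update π₀ f' v₁) (SP.node f' ((v₁, s₁) :: t) d)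
        ↔ mem π₀ s₁ := by
      rw [mem_node', Function.update_self, getD_cons_self]
      exact mem_update _ s₁ le_rfl f' (hbRO _ hq) π₀ v₁
    have e2 : mem (Function.update π₀ f' v) (SP.node f' ((v₁, s₁) :: t) d)
        ↔ mem π₀ d := by
      rw [mem_node', Function.update_self, getD_not_mem d hv]
      exact mem_update _ d le_rfl f' hdRO π₀ v
    exact hπ₀ ((e1.symm.trans (hsem _)).trans ((hsem _).symm.trans e2))

theorem lt_absurd [Infinite V] (n : ℕ)
    (ihn : ∀ p₁ p₂ : SP F V, sizeOf p₁ + sizeOf p₂ ≤ n → ∀ f, ROf f p₁ → ROf f p₂ →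
      (∀ π, mem π p₁ ↔ mem π p₂) → p₁ = p₂)
    {f₁ f₂ : F} {b₁ b₂ : List (V × SP F V)} {d₁ d₂ : SP F V}
    (hsz : sizeOf (SP.node f₁ b₁ d₁) + sizeOf (SP.node f₂ b₂ d₂) ≤ n + 1)
    (hb₁ : b₁ ≠ []) (hbRO₁ : ∀ q ∈ b₁, ROf f₁ q.2) (hdRO₁ : ROf f₁ d₁)
    (hred₁ : ∀ q ∈ b₁, q.2 ≠ d₁)
    (hb₂ : b₂ ≠ []) (hbRO₂ : ∀ q ∈ b₂, ROf f₂ q.2) (hdRO₂ : ROf f₂ d₂)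
    (hred₂ : ∀ q ∈ b₂, q.2 ≠ d₂)
    (hsort₂ : List.Pairwise (· < ·) (b₂.map Prod.fst))
    (hlt : f₁ < f₂)
    (hsem : ∀ π, mem π (SP.node f₁ b₁ d₁) ↔ mem π (SP.node f₂ b₂ d₂)) : False := by
  have hRO2 : ROf f₁ (SP.node f₂ b₂ d₂) :=
    .node f₁ f₂ b₂ d₂ hlt hb₂ hbRO₂ hdRO₂ hred₂ hsort₂
  cases b₁ with
  | nil => exact hb₁ rfl
  | cons q t =>
    obtain ⟨v₁, s₁⟩ := q
    have hq : (v₁, s₁) ∈ (v₁, s₁) :: t := List.mem_cons_self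
    obtain ⟨v, hv⟩ := exists_fresh (((v₁, s₁) :: t).map Prod.fst)
    have key : ∀ (w : V) (g : SP F V), ROf f₁ g →
        getD ((v₁, s₁) :: t) w d₁ = g →
        ∀ π, mem π g ↔ mem π (SP.node f₂ b₂ d₂) := by
      intro w g hg hget π
      have e1 : mem π g ↔ mem (Function.update π f₁ w) g :=
        (mem_update _ g le_rfl f₁ hg π w).symm
      have e2 : mem (Function.update π f₁ w) (SP.node f₁ ((v₁, s₁) :: t) d₁)
          ↔ mem (Function.update π f₁ w) g := by
        rw [mem_node', Function.update_self, hget]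
      have e3 : mem (Function.update π f₁ w) (SP.node f₂ b₂ d₂)
          ↔ mem π (SP.node f₂ b₂ d₂) :=
        mem_update _ _ le_rfl f₁ hRO2 π w
      exact (e1.trans (e2.symm.trans ((hsem _).trans e3)))
    have k1 := key v₁ s₁ (hbRO₁ _ hq) (getD_cons_self _ _ _ _)
    have k2 := key v d₁ hdRO₁ (getD_not_mem d₁ hv)
    have hsz' : sizeOf s₁ + sizeOf d₁ ≤ n := by
      have := sizeOf_pos (SP.node f₂ b₂ d₂)
      simp only [SP.node.sizeOf_spec, List.cons.sizeOf_spec, Prod.mk.sizeOf_spec] at hsz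
      omega
    exact hred₁ (v₁, s₁) hq (ihn s₁ d₁ hsz' f₁ (hbRO₁ _ hq) hdRO₁
      (fun π => (k1 π).trans (k2 π).symm))

theorem canon_aux [Infinite V] : ∀ (n : ℕ) (p₁ p₂ : SP F V),
    sizeOf p₁ + sizeOf p₂ ≤ n →
    ∀ f, ROf f p₁ → ROf f p₂ → (∀ π, mem π p₁ ↔ mem π p₂) → p₁ = p₂ := by
  intro n
  induction n with
  | zero =>
    intro p₁ p₂ h
    have := sizeOf_pos p₁; have := sizeOf_pos p₂; omega
  | succ n ih =>
    intro p₁ p₂ hsz f h₁ h₂ hsem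
    have hπ : ∃ π : F → V, True := ⟨fun _ => Classical.arbitrary V, trivial⟩
    obtain ⟨π, -⟩ := hπ
    cases h₁ with
    | bot =>
      cases h₂ with
      | bot => rfl
      | top =>
        exfalso
        have := hsem π
        rw [mem, mem] at this
        exact this.mpr trivial
      | node _ f₂ b₂ d₂ hff hb hbRO hdRO hred hsort =>
        exfalso
        refine node_const_absurd n ih ?_ hb hbRO hdRO hred False
          (fun π => (hsem π).symm.trans (by rw [mem]))
        have := sizeOf_pos (SP.bot : SP F V)
        omega
    | top =>
      cases h₂ with
      | top => rfl
      | bot =>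
        exfalso
        have := hsem π
        rw [mem, mem] at this
        exact this.mp trivial
      | node _ f₂ b₂ d₂ hff hb hbRO hdRO hred hsort =>
        exfalso
        refine node_const_absurd n ih ?_ hb hbRO hdRO hred True
          (fun π => (hsem π).symm.trans (by rw [mem]))
        have := sizeOf_pos (SP.top : SP F V)
        omega
    | node _ f₁ b₁ d₁ hff₁ hb₁ hbRO₁ hdRO₁ hred₁ hsort₁ =>
      cases h₂ with
      | bot =>
        exfalso
        refine node_const_absurd n ih ?_ hb₁ hbRO₁ hdRO₁ hred₁ False
          (fun π => (hsem π).trans (by rw [mem]))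
        have := sizeOf_pos (SP.bot : SP F V)
        omega
      | top =>
        exfalso
        refine node_const_absurd n ih ?_ hb₁ hbRO₁ hdRO₁ hred₁ True
          (fun π => (hsem π).trans (by rw [mem]))
        have := sizeOf_pos (SP.top : SP F V)
        omega
      | node _ f₂ b₂ d₂ hff₂ hb₂ hbRO₂ hdRO₂ hred₂ hsort₂ =>
        rcases lt_trichotomy f₁ f₂ with hlt | heq | hgt
        · exact absurd (lt_absurd n ih hsz hb₁ hbRO₁ hdRO₁ hred₁
            hb₂ hbRO₂ hdRO₂ hred₂ hsort₂ hlt hsem) id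
        · subst heq
          have hg : ∀ v, getD b₁ v d₁ = getD b₂ v d₂ := by
            intro v
            have hRO₁ := ROf_getD (b := b₁) (d := d₁) v hbRO₁ hdRO₁
            have hRO₂ := ROf_getD (b := b₂) (d := d₂) v hbRO₂ hdRO₂
            refine ih _ _ ?_ f₁ hRO₁ hRO₂ ?_
            · have g1 := sizeOf_getD_lt b₁ v d₁
              have g2 := sizeOf_getD_lt b₂ v d₂
              simp only [SP.node.sizeOf_spec] at hsz
              omega
            · intro π
              rw [← mem_update _ _ le_rfl f₁ hRO₁ π v,
                ← mem_update _ _ le_rfl f₁ hRO₂ π v]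
              have := hsem (Function.update π f₁ v)
              rwa [mem_node', mem_node', Function.update_self] at this
          obtain ⟨v, hv⟩ := exists_fresh (b₁.map Prod.fst ++ b₂.map Prod.fst)
          simp only [List.mem_append, not_or] at hv
          have hd : d₁ = d₂ := by
            have := hg v
            rwa [getD_not_mem d₁ hv.1, getD_not_mem d₂ hv.2] at this
          subst hd
          rw [branches_eq b₁ b₂ d₁ hsort₁ hsort₂ hred₁ hred₂ hg]
        · exact absurd (lt_absurd n ih (by omega) hb₂ hbRO₂ hdRO₂ hred₂
            hb₁ hbRO₁ hdRO₁ hred₁ hsort₁ hgt (fun π => (hsem π).symm)) id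

end SP

theorem RO_canonical {F V : Type} [LinearOrder F] [LinearOrder V] [Infinite V]
    (p₁ p₂ : SP F V) (h₁ : SP.RO p₁) (h₂ : SP.RO p₂) :
    p₁ = p₂ ↔ SP.sem p₁ = SP.sem p₂ := by
  constructor
  · rintro rfl; rfl
  · intro hsem
    obtain ⟨f₁, h₁⟩ := h₁
    obtain ⟨f₂, h₂⟩ := h₂
    exact SP.canon_aux (sizeOf p₁ + sizeOf p₂) p₁ p₂ le_rfl (min f₁ f₂)
      (SP.ROf_mono (min_le_left _ _) h₁) (SP.ROf_mono (min_le_right _ _) h₂)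
      (fun π => Set.ext_iff.mp hsem π)
end

section
/- If an SP p is reduced and ordered for field f (so p never tests field f), then membership in ⟦p⟧ is independent of the value of field f: for any packet π, if π ∈ ⟦p⟧ then π[f←v] ∈ ⟦p⟧ for all values v, and if π ∉ ⟦p⟧ then π[f←v] ∉ ⟦p⟧ for all values v. -/
namespace SP
variable {F V : Type} [LinearOrder F] [LinearOrder V]

theorem mem_update_iff' (f : F) (p : SP F V) (hro : ROf f p)
    (g : F) (hg : g ≤ f) (π : F → V) (v : V) :
    mem (Function.update π g v) p ↔ mem π p := by
  induction hro generalizing g π with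
  | bot => simp [mem]
  | top => simp [mem]
  | node f f' b d hlt hne hb hd hnd hs ihb ihd =>
    rw [mem, mem]
    have hgf' : f' ≠ g := (ne_of_lt (lt_of_le_of_lt hg hlt)).symm
    rw [Function.update_of_ne hgf' _ π]
    have hg' : g ≤ f' := le_of_lt (lt_of_le_of_lt hg hlt)
    clear hb hnd hs hne
    induction b with
    | nil => exact ihd g hg' π
    | cons q rest ih =>
      simp only [getD]
      split
      · exact ihb q (List.mem_cons_self) g hg' π
      · exact ih (fun q hq => ihb q (List.mem_cons_of_mem _ hq))
end SP

theorem mem_update_of_ROf {F V : Type} [LinearOrder F] [LinearOrder V]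
    (f : F) (p : SP F V) (hro : SP.ROf f p) (π : F → V) :
    (SP.mem π p → ∀ v : V, SP.mem (Function.update π f v) p) ∧
    (¬ SP.mem π p → ∀ v : V, ¬ SP.mem (Function.update π f v) p) := by
  constructor
  · intro h v
    exact (SP.mem_update_iff' f p hro f le_rfl π v).mpr h
  · intro h v
    exact fun hc => h ((SP.mem_update_iff' f p hro f le_rfl π v).mp hc)
end

section
/- The embedding of symbolic packets into symbolic packet programs is correct: for any SP p and packets π, π', the output π' belongs to ⟦SPPid(p)⟧(π) if and only if π' = π and π ∈ ⟦p⟧. That is, the embedded SPP acts as the partial identity function restricted to the packet set denoted by p. -/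
/-- Symbolic packet programs: `s ::= ⊥ | ⊤ | SPP(f, b, m, d)` where `b` maps
test values to assignment maps, `m` is the default assignment map, and `d` is
the default-identity continuation. -/
inductive SPP (F V : Type) : Type where
  | bot : SPP F V
  | top : SPP F V
  | node : F → List (V × List (V × SPP F V)) → List (V × SPP F V) → SPP F V → SPP F V

/-- Association-list lookup (first binding wins). -/
def alook {α β : Type _} [DecidableEq α] : List (α × β) → α → Option β
  | [], _ => none
  | q :: rest, v => if q.1 = v then some q.2 else alook rest v

theorem alook_mem {α β : Type _} [DecidableEq α] {l : List (α × β)} {v : α} {x : β}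
    (h : alook l v = some x) : ∃ k, (k, x) ∈ l := by
  induction l with
  | nil => simp [alook] at h
  | cons q rest ih =>
    simp only [alook] at h
    split at h
    · obtain ⟨a, c⟩ := q
      exact ⟨a, by simp_all⟩
    · obtain ⟨k, hk⟩ := ih h
      exact ⟨k, List.mem_cons_of_mem _ hk⟩

namespace SPP

theorem sizeOf_snd_lt_of_mem {V β : Type} [SizeOf β] {b : List (V × β)}
    {q : V × β} (h : q ∈ b) : sizeOf q.2 < sizeOf b := by
  have h1 := List.sizeOf_lt_of_mem h
  obtain ⟨a, c⟩ := q
  simp at h1 ⊢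
  omega

variable {F V : Type} [DecidableEq F] [DecidableEq V]

/-- The output relation of an SPP: `osem s π π'` holds when running `s` on
input packet `π` can produce output packet `π'`. -/
def osem (s : SPP F V) (π π' : F → V) : Prop :=
  match s with
  | .bot => False
  | .top => π' = π
  | .node f b m d =>
    match h : alook b (π f) with
    | some mb =>
        ∃ wq : { x // x ∈ mb }, osem wq.1.2 (Function.update π f wq.1.1) π'
    | none =>
        (∃ wq : { x // x ∈ m }, osem wq.1.2 (Function.update π f wq.1.1) π')
        ∨ (alook m (π f) = none ∧ osem d π π')
termination_by sizeOf s
decreasing_by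
  · obtain ⟨k, hk⟩ := alook_mem h
    have h1 : sizeOf mb < sizeOf b := by
      have := List.sizeOf_lt_of_mem hk
      simp at this; omega
    have h2 := sizeOf_snd_lt_of_mem wq.2
    simp only [SPP.node.sizeOf_spec]
    omega
  · have h2 := sizeOf_snd_lt_of_mem wq.2
    simp only [SPP.node.sizeOf_spec]
    omega
  · simp only [SPP.node.sizeOf_spec]
    omega

end SPP

namespace SPP

variable {F V : Type} [DecidableEq F] [DecidableEq V]

/-- Embedding of symbolic packets into symbolic packet programs:
each test branch `v ↦ p` becomes a test for `v` followed by the (identity)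
assignment of `v`, with an empty default-assignment map. -/
def SPPid : SP F V → SPP F V
  | .bot => .bot
  | .top => .top
  | .node f b d =>
      .node f (b.attach.map (fun q => (q.1.1, [(q.1.1, SPPid q.1.2)]))) []
        (SPPid d)
termination_by p => sizeOf p
decreasing_by
  · have h1 := sizeOf_snd_lt_of_mem q.2
    simp only [SP.node.sizeOf_spec]
    omega
  · simp only [SP.node.sizeOf_spec]
    omega

end SPP


section Aux
variable {F V : Type} [DecidableEq F] [DecidableEq V]

theorem getD_eq_alook (b : List (V × SP F V)) (v : V) (d : SP F V) :
    SP.getD b v d = (alook b v).getD d := by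
  induction b with
  | nil => rfl
  | cons q rest ih =>
    simp only [SP.getD, alook]
    split <;> simp [ih]

theorem alook_pmap_map {γ : Type} {b0 : Type} [DecidableEq b0]
    (b : List (V × SP F V)) (P : V × SP F V → Prop) (hp : ∀ x ∈ b, P x)
    (g : V → SP F V → γ) (v : V) :
    alook ((b.pmap Subtype.mk hp).map fun q => (q.1.1, g q.1.1 q.1.2)) v
      = (alook b v).map (g v) := by
  induction b with
  | nil => rfl
  | cons q rest ih =>
    simp only [List.pmap, List.map_cons, alook]
    split
    · rename_i h; subst h; simp
    · exact ih _

theorem alook_attach_map {γ : Type} (b : List (V × SP F V))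
    (g : V → SP F V → γ) (v : V) :
    alook (b.attach.map fun q => (q.1.1, g q.1.1 q.1.2)) v
      = (alook b v).map (g v) :=
  alook_pmap_map (b0 := Unit) b _ _ g v

theorem osem_node_eq (f : F) (b : List (V × List (V × SPP F V)))
    (m : List (V × SPP F V)) (d : SPP F V) (π π' : F → V) :
    SPP.osem (SPP.node f b m d) π π' =
      (match alook b (π f) with
       | some mb =>
          ∃ wq : { x // x ∈ mb }, SPP.osem wq.1.2 (Function.update π f wq.1.1) π'
       | none =>
          (∃ wq : { x // x ∈ m }, SPP.osem wq.1.2 (Function.update π f wq.1.1) π')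
          ∨ (alook m (π f) = none ∧ SPP.osem d π π')) := by
  rw [SPP.osem]
  split <;> rename_i heq <;> simp [heq]

theorem alook_sizeOf_lt {b : List (V × SP F V)} {v : V} {p : SP F V}
    (h : alook b v = some p) : sizeOf p < sizeOf b := by
  obtain ⟨k, hk⟩ := alook_mem h
  have := List.sizeOf_lt_of_mem hk
  simp at this; omega

end Aux

theorem SPPid_correct {F V : Type} [DecidableEq F] [DecidableEq V]
    (p : SP F V) (π π' : F → V) :
    SPP.osem (SPP.SPPid p) π π' ↔ π' = π ∧ SP.mem π p := by
  match p with
  | .bot => simp [SPP.SPPid, SPP.osem, SP.mem]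
  | .top => simp [SPP.SPPid, SPP.osem, SP.mem]
  | .node f b d =>
    rw [SPP.SPPid, SP.mem, osem_node_eq,
      alook_attach_map b (fun v p => [(v, SPP.SPPid p)]) (π f),
      getD_eq_alook]
    cases h : alook b (π f) with
    | none =>
      simp only [Option.map_none, Option.getD_none]
      constructor
      · rintro (⟨⟨x, hx⟩, _⟩ | ⟨-, h2⟩)
        · simp at hx
        · exact (SPPid_correct d π π').mp h2
      · intro h2
        exact Or.inr ⟨rfl, (SPPid_correct d π π').mpr h2⟩
    | some p0 =>
      have hlt : sizeOf p0 < sizeOf b := alook_sizeOf_lt h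
      simp only [Option.map_some, Option.getD_some]
      constructor
      · rintro ⟨⟨⟨w, s⟩, hw⟩, hs⟩
        simp only [List.mem_singleton, Prod.mk.injEq] at hw
        obtain ⟨rfl, rfl⟩ := hw
        rw [Function.update_eq_self] at hs
        exact (SPPid_correct p0 π π').mp hs
      · intro h2
        refine ⟨⟨(π f, SPP.SPPid p0), by simp⟩, ?_⟩
        rw [Function.update_eq_self]
        exact (SPPid_correct p0 π π').mpr h2
termination_by sizeOf p
decreasing_by
  all_goals (simp only [SP.node.sizeOf_spec]; omega)
end

section
/- The pull operation is correct: for an SPP s and an SP p, defining pull(s,p) = bwd(s ·̂ SPPid(p)) where bwd computes the domain of an SPP's relation (⟦bwd(s)⟧ = {α | ∃β. β ∈ ⟦s⟧(α)}), a packet α belongs to ⟦pull(s,p)⟧ if and only if there exists a packet β ∈ ⟦p⟧ with β ∈ ⟦s⟧(α). -/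
/-!
Statement 17: correctness of the `pull` operation. Given the identity
embedding `sppid` of SPs into SPPs, relational composition `comp` of SPPs,
and `bwd` computing the domain of an SPP (each satisfying its specification),
`pull(s,p) = bwd(s ·̂ sppid p)` satisfies:
`α ∈ ⟦pull(s,p)⟧ ↔ ∃ β ∈ ⟦p⟧, β ∈ ⟦s⟧(α)`.
-/

theorem pull_correct {Pk SP SPP : Type}
    (semSP : SP → Set Pk) (semSPP : SPP → Pk → Set Pk)
    (sppid : SP → SPP)
    (hid : ∀ (p : SP) (π π' : Pk),
      π' ∈ semSPP (sppid p) π ↔ π' = π ∧ π ∈ semSP p)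
    (comp : SPP → SPP → SPP)
    (hcomp : ∀ (s₁ s₂ : SPP) (π π'' : Pk),
      π'' ∈ semSPP (comp s₁ s₂) π ↔
        ∃ π', π' ∈ semSPP s₁ π ∧ π'' ∈ semSPP s₂ π')
    (bwd : SPP → SP)
    (hbwd : ∀ (s : SPP) (α : Pk), α ∈ semSP (bwd s) ↔ ∃ β, β ∈ semSPP s α)
    (s : SPP) (p : SP) (α : Pk) :
    α ∈ semSP (bwd (comp s (sppid p))) ↔
      ∃ β, β ∈ semSP p ∧ β ∈ semSPP s α := by
  simp only [hbwd, hcomp, hid]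
  constructor
  · rintro ⟨β, g, hg, rfl, hp⟩; exact ⟨β, hp, hg⟩
  · rintro ⟨β, hp, hs⟩; exact ⟨β, β, hs, rfl, hp⟩
end

section
/- Iteration of SPPs converges: for any SPP p over finitely many fields and finitely many values occurring in p, the sequence of partial sums ⊤, ⊤ ⊞ p, ⊤ ⊞ p ⊞ p·̂p, … (where ⊞ is union of SPP relations and ·̂ is relational composition) is eventually constant, and its limit p^★ satisfies ⟦p^★⟧(π) = ⋃ₙ≥₀ ⟦pⁿ⟧(π) for every packet π, where p⁰ = ⊤ and pⁿ⁺¹ = p ·̂ pⁿ. -/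
/-!
Statement 19: iteration of SPPs converges. Over finitely many fields and
values, for an abstract type `T` of (canonical-form) SPPs — so that the
semantics map is injective — equipped with `⊤` (identity), a union operation
`⊞`, and relational composition `·̂` satisfying their specifications, the
sequence of partial sums `⊤, ⊤ ⊞ p, ⊤ ⊞ p ⊞ p·̂p, …` is eventually constant
and its limit `p★` satisfies `⟦p★⟧(π) = ⋃ₙ ⟦pⁿ⟧(π)` for every packet `π`,
where `p⁰ = ⊤` and `pⁿ⁺¹ = p ·̂ pⁿ`.
-/

/-- Powers of an SPP: `p⁰ = ⊤`, `pⁿ⁺¹ = p ·̂ pⁿ`. -/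
def powT {T : Type} (comp : T → T → T) (topT : T) (p : T) : ℕ → T
  | 0 => topT
  | n + 1 => comp p (powT comp topT p n)

/-- Partial sums `⊤ ⊞ p ⊞ p·̂p ⊞ ⋯ ⊞ pⁿ`. -/
def psumT {T : Type} (plusT : T → T → T) (comp : T → T → T) (topT : T)
    (p : T) : ℕ → T
  | 0 => topT
  | n + 1 => plusT (psumT plusT comp topT p n) (powT comp topT p (n + 1))

theorem spp_star_converges {F V T : Type} [Fintype F] [Fintype V]
    (sem : T → (F → V) → Set (F → V))
    (hcanon : Function.Injective sem)
    (topT : T) (htop : ∀ π : F → V, sem topT π = {π})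
    (plusT : T → T → T)
    (hplus : ∀ (p q : T) (π : F → V), sem (plusT p q) π = sem p π ∪ sem q π)
    (comp : T → T → T)
    (hcomp : ∀ (p q : T) (π : F → V),
      sem (comp p q) π = {π'' | ∃ π', π' ∈ sem p π ∧ π'' ∈ sem q π'})
    (p : T) :
    ∃ N : ℕ,
      (∀ n : ℕ, N ≤ n →
        psumT plusT comp topT p n = psumT plusT comp topT p N) ∧
      (∀ π : F → V,
        sem (psumT plusT comp topT p N) π = ⋃ n : ℕ, sem (powT comp topT p n) π) := by
  classical
  -- characterization of partial sums
  set S : ℕ → (F → V) → Set (F → V) := fun n => sem (psumT plusT comp topT p n) with hS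
  have hchar : ∀ n π, S n π = {x | ∃ k ≤ n, x ∈ sem (powT comp topT p k) π} := by
    intro n
    induction n with
    | zero =>
      intro π
      ext x
      simp only [hS, psumT, Set.mem_setOf_eq]
      constructor
      · intro hx; exact ⟨0, le_refl 0, hx⟩
      · rintro ⟨k, hk, hx⟩
        interval_cases k
        exact hx
    | succ n ih =>
      intro π
      ext x
      simp only [hS, psumT, hplus, Set.mem_union, Set.mem_setOf_eq] at *
      constructor
      · rintro (hx | hx)
        · obtain ⟨k, hk, hx⟩ := (ih π ▸ hx : x ∈ {x | ∃ k ≤ n, x ∈ sem (powT comp topT p k) π})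
          exact ⟨k, by omega, hx⟩
        · exact ⟨n + 1, le_refl _, hx⟩
      · rintro ⟨k, hk, hx⟩
        rcases Nat.lt_or_ge k (n + 1) with h | h
        · left
          have : x ∈ {x | ∃ k ≤ n, x ∈ sem (powT comp topT p k) π} := ⟨k, by omega, hx⟩
          rw [ih π]; exact this
        · right
          have : k = n + 1 := by omega
          subst this; exact hx
  have hmono : Monotone S := by
    intro m n hmn π x hx
    rw [hchar] at hx ⊢
    obtain ⟨k, hk, hx⟩ := hx
    exact ⟨k, le_trans hk hmn, hx⟩
  -- the space of relations is finite
  haveI : Finite ((F → V) → Set (F → V)) := by infer_instance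
  -- extract a maximal element of the range of S
  obtain ⟨a, ⟨N, rfl⟩, hmax⟩ :=
    Set.Finite.exists_maximalFor id (Set.range S) (Set.toFinite (Set.range S)) ⟨S 0, 0, rfl⟩
  have hstab : ∀ n, N ≤ n → S n = S N := by
    intro n hn
    exact le_antisymm (hmax ⟨n, rfl⟩ (hmono hn)) (hmono hn)
  refine ⟨N, ?_, ?_⟩
  · intro n hn
    exact hcanon (hstab n hn)
  · intro π
    ext x
    simp only [Set.mem_iUnion]
    constructor
    · intro hx
      have hx' : x ∈ S N π := hx
      rw [hchar] at hx'
      obtain ⟨k, _, hk⟩ := hx'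
      exact ⟨k, hk⟩
    · rintro ⟨n, hn⟩
      have hx : x ∈ S (max n N) π := by
        rw [hchar]; exact ⟨n, le_max_left _ _, hn⟩
      have := hstab (max n N) (le_max_right _ _)
      rw [this] at hx
      exact hx
end
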